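/- For q = 2^(2n+1) and θ = 2^n, the set {t + t^θ : t ∈ F_q} is an index-2 additive subgroup of F_q, equal to the kernel of the map λ : F_q → {±1}, where λ(x) = 1 if X^2 + X + x has a root in F_q and λ(x) = -1 otherwise. -/

import Mathlib

/-!
Both `t ↦ t + t ^ θ` and the Artin–Schreier map `y ↦ y ^ 2 + y` are additive in
characteristic 2. The image of the first lies in the image of the second, since
`t + t ^ (2 ^ (k + 1)) = (t + t ^ (2 ^ k)) + (t ^ (2 ^ k) + (t ^ (2 ^ k)) ^ 2)`.
Their kernels are the fixed points of `t ↦ t ^ θ` and of `t ↦ t ^ 2`, and these agree: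
`t ^ θ = t` gives `t = t ^ (2 θ ^ 2) = t ^ 2`. So the two images have the same size `q / 2`
and are equal.
-/

section CharTwo

variable {R : Type*} [CommRing R] [CharP R 2]

variable (R) in
def addPowTwoPow (k : ℕ) : R →+ R where
  toFun t := t + t ^ 2 ^ k
  map_zero' := by simp
  map_add' a b := by
    simp only [add_pow_char_pow]
    ring

@[simp]
lemma addPowTwoPow_apply (k : ℕ) (t : R) : addPowTwoPow R k t = t + t ^ 2 ^ k := rfl

lemma mem_ker_addPowTwoPow {k : ℕ} {t : R} : t ∈ (addPowTwoPow R k).ker ↔ t ^ 2 ^ k = t := by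
  rw [AddMonoidHom.mem_ker, addPowTwoPow_apply, CharTwo.add_eq_zero, eq_comm]

lemma range_addPowTwoPow_le_one (k : ℕ) :
    (addPowTwoPow R k).range ≤ (addPowTwoPow R 1).range := by
  induction k with
  | zero =>
    rintro _ ⟨t, rfl⟩
    simp [CharTwo.add_self_eq_zero]
  | succ k ih =>
    rintro _ ⟨t, rfl⟩
    have hsplit : addPowTwoPow R (k + 1) t =
        addPowTwoPow R k t + addPowTwoPow R 1 (t ^ 2 ^ k) := by
      simp only [addPowTwoPow_apply, ← pow_mul]
      linear_combination -(t ^ 2 ^ k) * CharTwo.two_eq_zero (R := R)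
    rw [hsplit]
    exact add_mem (ih ⟨t, rfl⟩) ⟨t ^ 2 ^ k, rfl⟩

end CharTwo

lemma card_ker_addPowTwoPow_one {R : Type*} [CommRing R] [IsDomain R] [CharP R 2] :
    Nat.card (addPowTwoPow R 1).ker = 2 := by
  have hker : ((addPowTwoPow R 1).ker : Set R) = {0, 1} := by
    ext t
    rw [SetLike.mem_coe, mem_ker_addPowTwoPow, pow_one, sq, ← IsIdempotentElem.eq_1,
      IsIdempotentElem.iff_eq_zero_or_one]
    rfl
  rw [← SetLike.coe_sort_coe, hker, Nat.card_coe_set_eq, Set.ncard_pair zero_ne_one]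

lemma AddMonoidHom.card_range_mul_card_ker {G H : Type*} [AddGroup G] [AddGroup H]
    (f : G →+ H) :
    Nat.card f.range * Nat.card f.ker = Nat.card G := by
  rw [← AddSubgroup.index_ker, mul_comm, AddSubgroup.card_mul_index]

section FiniteField

variable {F : Type*} [Field F] [Fintype F] [CharP F 2] {n : ℕ}

lemma ker_addPowTwoPow_le_one (hF : Fintype.card F = 2 ^ (2 * n + 1)) :
    (addPowTwoPow F n).ker ≤ (addPowTwoPow F 1).ker := by
  intro t ht
  rw [mem_ker_addPowTwoPow] at ht ⊢
  calc t ^ 2 ^ 1 = t ^ 2 := by rw [pow_one]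
    _ = ((t ^ 2 ^ n) ^ 2 ^ n) ^ 2 := by rw [ht, ht]
    _ = t ^ Fintype.card F := by rw [hF, ← pow_mul, ← pow_mul]; ring
    _ = t := FiniteField.pow_card t

lemma range_addPowTwoPow_eq_one (hF : Fintype.card F = 2 ^ (2 * n + 1)) :
    (addPowTwoPow F n).range = (addPowTwoPow F 1).range := by
  refine AddSubgroup.eq_of_le_of_card_ge (range_addPowTwoPow_le_one n) ?_
  have hcard := (addPowTwoPow F n).card_range_mul_card_ker
  rw [← (addPowTwoPow F 1).card_range_mul_card_ker, card_ker_addPowTwoPow_one] at hcard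
  have hker : Nat.card (addPowTwoPow F n).ker ≤ 2 :=
    card_ker_addPowTwoPow_one (R := F) ▸ AddSubgroup.card_le_of_le (ker_addPowTwoPow_le_one hF)
  nlinarith

end FiniteField

theorem stmt_5 (n : ℕ) (F : Type*) [Field F] [Fintype F]
    (hF : Fintype.card F = 2 ^ (2 * n + 1)) :
    {x : F | ∃ t : F, t + t ^ (2 ^ n) = x} = {x : F | ∃ y : F, y ^ 2 + y = x} ∧
    Nat.card {x : F | ∃ t : F, t + t ^ (2 ^ n) = x} * 2 = 2 ^ (2 * n + 1) := by
  have : CharP F 2 := charP_of_card_eq_prime_pow hF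
  have himage : {x : F | ∃ t : F, t + t ^ (2 ^ n) = x} = (addPowTwoPow F n).range := rfl
  have hAS : {x : F | ∃ y : F, y ^ 2 + y = x} = (addPowTwoPow F 1).range := by
    ext x
    simp [add_comm]
  refine ⟨by rw [himage, hAS, range_addPowTwoPow_eq_one hF], ?_⟩
  rw [himage, SetLike.coe_sort_coe, range_addPowTwoPow_eq_one hF, ← hF,
    ← Nat.card_eq_fintype_card, ← (addPowTwoPow F 1).card_range_mul_card_ker,
    card_ker_addPowTwoPow_one]
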